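/- arXiv:2412.01722 — 5 statements merged into one kernel-verified Lean document; each statement's English description precedes it below -/
import Mathlib

section
/- Let A be a bounded lattice that is a dense and compact sublattice of a complete lattice A^δ. Then the set of clopen elements of A^δ (elements that are both closed and open) is exactly A, i.e. A = K(A^δ) ∩ O(A^δ), where K(A^δ) is the set of meets of nonempty subsets of A and O(A^δ) is the set of joins of nonempty subsets of A. -/
variable {α : Type*} [CompleteLattice α]

/-- An element is closed if it is the meet of a nonempty subset of S. -/
def IsClosedElem (S : Set α) (k : α) : Prop :=
  ∃ F : Set α, F ⊆ S ∧ F.Nonempty ∧ k = sInf F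

/-- An element is open if it is the join of a nonempty subset of S. -/
def IsOpenElem (S : Set α) (o : α) : Prop :=
  ∃ I : Set α, I ⊆ S ∧ I.Nonempty ∧ o = sSup I

/-- S is dense: every element is a join of closed elements and a meet of open elements. -/
def IsDenseSub (S : Set α) : Prop :=
  ∀ u : α, u = sSup {k | IsClosedElem S k ∧ k ≤ u} ∧
           u = sInf {o | IsOpenElem S o ∧ u ≤ o}

/-- S is compact. -/
def IsCompactSub (S : Set α) : Prop :=
  ∀ F I : Set α, F ⊆ S → I ⊆ S → F.Nonempty → I.Nonempty → sInf F ≤ sSup I →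
    ∃ a ∈ F, ∃ b ∈ I, a ≤ b

/-- S is a bounded sublattice. -/
def IsBoundedSublattice (S : Set α) : Prop :=
  ⊥ ∈ S ∧ ⊤ ∈ S ∧ ∀ a ∈ S, ∀ b ∈ S, a ⊔ b ∈ S ∧ a ⊓ b ∈ S

theorem isClosedElem_of_mem {S : Set α} {a : α} (ha : a ∈ S) : IsClosedElem S a :=
  ⟨{a}, Set.singleton_subset_iff.mpr ha, Set.singleton_nonempty a, sInf_singleton.symm⟩

theorem isOpenElem_of_mem {S : Set α} {a : α} (ha : a ∈ S) : IsOpenElem S a :=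
  ⟨{a}, Set.singleton_subset_iff.mpr ha, Set.singleton_nonempty a, sSup_singleton.symm⟩

theorem IsCompactSub.mem_of_isClosedElem_of_isOpenElem {S : Set α} (hc : IsCompactSub S)
    {x : α} (hk : IsClosedElem S x) (ho : IsOpenElem S x) : x ∈ S := by
  obtain ⟨F, hFS, hFne, rfl⟩ := hk
  obtain ⟨I, hIS, hIne, hI⟩ := ho
  obtain ⟨a, ha, b, hb, hab⟩ := hc F I hFS hIS hFne hIne hI.le
  have hFa : sInf F = a := le_antisymm (sInf_le ha) (hab.trans (hI ▸ le_sSup hb))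
  exact hFa ▸ hFS ha

theorem stmt0_general (S : Set α)
    (hc : IsCompactSub S) :
    S = {x | IsClosedElem S x} ∩ {x | IsOpenElem S x} := by
  ext x
  exact ⟨fun hx => ⟨isClosedElem_of_mem hx, isOpenElem_of_mem hx⟩,
    fun ⟨hk, ho⟩ => hc.mem_of_isClosedElem_of_isOpenElem hk ho⟩

theorem stmt0 (S : Set α) (hS : IsBoundedSublattice S) (hd : IsDenseSub S)
    (hc : IsCompactSub S) :
    S = {x | IsClosedElem S x} ∩ {x | IsOpenElem S x} :=
  stmt0_general S hc
end

section
/- Let A be a bounded lattice with canonical extension A^δ. For any closed elements k₁, k₂ ∈ K(A^δ) and any b ∈ A, if k₁ ∧ k₂ ≤ b then there exist a₁, a₂ ∈ A with k₁ ≤ a₁, k₂ ≤ a₂ and a₁ ∧ a₂ ≤ b. -/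
variable {α : Type*} [CompleteLattice α]

open Set

theorem sInf_image2_inf {F₁ F₂ : Set α} (h₁ : F₁.Nonempty) (h₂ : F₂.Nonempty) :
    sInf (image2 (· ⊓ ·) F₁ F₂) = sInf F₁ ⊓ sInf F₂ := by
  obtain ⟨a₁, ha₁⟩ := h₁
  obtain ⟨a₂, ha₂⟩ := h₂
  refine le_antisymm (le_inf ?_ ?_) ?_
  · exact le_sInf fun a ha => (sInf_le (mem_image2_of_mem ha ha₂)).trans inf_le_left
  · exact le_sInf fun a ha => (sInf_le (mem_image2_of_mem ha₁ ha)).trans inf_le_right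
  · refine le_sInf ?_
    rintro _ ⟨a, ha, a', ha', rfl⟩
    exact inf_le_inf (sInf_le ha) (sInf_le ha')

theorem IsCompactSub.exists_le_of_sInf_le {S F : Set α} (hc : IsCompactSub S) (hFS : F ⊆ S)
    (hF : F.Nonempty) {b : α} (hb : b ∈ S) (h : sInf F ≤ b) : ∃ a ∈ F, a ≤ b := by
  obtain ⟨a, ha, _, rfl, hab⟩ :=
    hc F {b} hFS (singleton_subset_iff.mpr hb) hF (singleton_nonempty b) (by rwa [sSup_singleton])
  exact ⟨a, ha, hab⟩

theorem IsCompactSub.exists_inf_le_of_sInf_inf_sInf_le {S F₁ F₂ : Set α} (hc : IsCompactSub S)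
    (hinf : ∀ a ∈ S, ∀ b ∈ S, a ⊓ b ∈ S) (hF₁S : F₁ ⊆ S) (hF₂S : F₂ ⊆ S)
    (hF₁ : F₁.Nonempty) (hF₂ : F₂.Nonempty) {b : α} (hb : b ∈ S)
    (h : sInf F₁ ⊓ sInf F₂ ≤ b) : ∃ a₁ ∈ F₁, ∃ a₂ ∈ F₂, a₁ ⊓ a₂ ≤ b := by
  have hGS : image2 (· ⊓ ·) F₁ F₂ ⊆ S := by
    rintro _ ⟨a₁, ha₁, a₂, ha₂, rfl⟩
    exact hinf a₁ (hF₁S ha₁) a₂ (hF₂S ha₂)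
  obtain ⟨_, ⟨a₁, ha₁, a₂, ha₂, rfl⟩, hle⟩ :=
    hc.exists_le_of_sInf_le hGS (hF₁.image2 hF₂) hb ((sInf_image2_inf hF₁ hF₂).trans_le h)
  exact ⟨a₁, ha₁, a₂, ha₂, hle⟩

theorem stmt5_general (S : Set α) (hS : IsBoundedSublattice S)
    (hc : IsCompactSub S) (k₁ k₂ b : α)
    (hk₁ : IsClosedElem S k₁) (hk₂ : IsClosedElem S k₂) (hb : b ∈ S)
    (h : k₁ ⊓ k₂ ≤ b) :
    ∃ a₁ ∈ S, ∃ a₂ ∈ S, k₁ ≤ a₁ ∧ k₂ ≤ a₂ ∧ a₁ ⊓ a₂ ≤ b := by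
  obtain ⟨F₁, hF₁S, hF₁, rfl⟩ := hk₁
  obtain ⟨F₂, hF₂S, hF₂, rfl⟩ := hk₂
  obtain ⟨a₁, ha₁, a₂, ha₂, hle⟩ :=
    hc.exists_inf_le_of_sInf_inf_sInf_le (fun a ha b hb => (hS.2.2 a ha b hb).2)
      hF₁S hF₂S hF₁ hF₂ hb h
  exact ⟨a₁, hF₁S ha₁, a₂, hF₂S ha₂, sInf_le ha₁, sInf_le ha₂, hle⟩

theorem stmt5 (S : Set α) (hS : IsBoundedSublattice S) (hd : IsDenseSub S)
    (hc : IsCompactSub S) (k₁ k₂ b : α)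
    (hk₁ : IsClosedElem S k₁) (hk₂ : IsClosedElem S k₂) (hb : b ∈ S)
    (h : k₁ ⊓ k₂ ≤ b) :
    ∃ a₁ ∈ S, ∃ a₂ ∈ S, k₁ ≤ a₁ ∧ k₂ ≤ a₂ ∧ a₁ ⊓ a₂ ≤ b :=
  stmt5_general S hS hc k₁ k₂ b hk₁ hk₂ hb h
end

section
/- Let A be a bounded lattice with canonical extension A^δ. For closed elements k₁, k₂ and an open element o, if k₁ ∧ k₂ ≤ o then there exist a₁, a₂, b ∈ A with k₁ ≤ a₁, k₂ ≤ a₂, b ≤ o, and a₁ ∧ a₂ ≤ b. -/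
variable {α : Type*} [CompleteLattice α]

/-!
Closed elements are meets of subsets of `S`, so `k₁ ⊓ k₂` is the meet of `F₁ ∪ F₂` when
`kᵢ = ⨅ Fᵢ`. Compactness yields a single `a ∈ F₁ ∪ F₂` lying below some `b ∈ S` below `o`; if
`a ∈ F₁`, take `a₁ = a` and `a₂ = ⊤`, and symmetrically otherwise.
-/

theorem IsCompactSub.exists_mem_le_of_sInf_le_open {S F : Set α} (hc : IsCompactSub S)
    (hFS : F ⊆ S) (hF : F.Nonempty) {o : α} (ho : IsOpenElem S o) (h : sInf F ≤ o) :
    ∃ a ∈ F, ∃ b ∈ S, b ≤ o ∧ a ≤ b := by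
  obtain ⟨I, hIS, hI, rfl⟩ := ho
  obtain ⟨a, ha, b, hb, hab⟩ := hc F I hFS hIS hF hI h
  exact ⟨a, ha, b, hIS hb, le_sSup hb, hab⟩

theorem exists_inf_le_of_mem_union {S F₁ F₂ : Set α} (htop : ⊤ ∈ S) (hF₁S : F₁ ⊆ S)
    (hF₂S : F₂ ⊆ S) {a : α} (ha : a ∈ F₁ ∪ F₂) :
    ∃ a₁ ∈ S, ∃ a₂ ∈ S, sInf F₁ ≤ a₁ ∧ sInf F₂ ≤ a₂ ∧ a₁ ⊓ a₂ ≤ a := by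
  rcases ha with ha | ha
  · exact ⟨a, hF₁S ha, ⊤, htop, sInf_le ha, le_top, by rw [inf_top_eq]⟩
  · exact ⟨⊤, htop, a, hF₂S ha, le_top, sInf_le ha, by rw [top_inf_eq]⟩

theorem stmt6_general (S : Set α) (hS : IsBoundedSublattice S)
    (hc : IsCompactSub S) (k₁ k₂ o : α)
    (hk₁ : IsClosedElem S k₁) (hk₂ : IsClosedElem S k₂) (ho : IsOpenElem S o)
    (h : k₁ ⊓ k₂ ≤ o) :
    ∃ a₁ ∈ S, ∃ a₂ ∈ S, ∃ b ∈ S, k₁ ≤ a₁ ∧ k₂ ≤ a₂ ∧ b ≤ o ∧ a₁ ⊓ a₂ ≤ b := by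
  obtain ⟨F₁, hF₁S, hF₁, rfl⟩ := hk₁
  obtain ⟨F₂, hF₂S, -, rfl⟩ := hk₂
  rw [← sInf_union] at h
  obtain ⟨a, ha, b, hbS, hbo, hab⟩ := hc.exists_mem_le_of_sInf_le_open
    (Set.union_subset hF₁S hF₂S) (hF₁.mono Set.subset_union_left) ho h
  obtain ⟨a₁, ha₁S, a₂, ha₂S, hk₁a₁, hk₂a₂, ha₁a₂⟩ :=
    exists_inf_le_of_mem_union hS.2.1 hF₁S hF₂S ha
  exact ⟨a₁, ha₁S, a₂, ha₂S, b, hbS, hk₁a₁, hk₂a₂, hbo, ha₁a₂.trans hab⟩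

theorem stmt6 (S : Set α) (hS : IsBoundedSublattice S) (hd : IsDenseSub S)
    (hc : IsCompactSub S) (k₁ k₂ o : α)
    (hk₁ : IsClosedElem S k₁) (hk₂ : IsClosedElem S k₂) (ho : IsOpenElem S o)
    (h : k₁ ⊓ k₂ ≤ o) :
    ∃ a₁ ∈ S, ∃ a₂ ∈ S, ∃ b ∈ S, k₁ ≤ a₁ ∧ k₂ ≤ a₂ ∧ b ≤ o ∧ a₁ ⊓ a₂ ≤ b :=
  stmt6_general S hS hc k₁ k₂ o hk₁ hk₂ ho h
end

section
/- Let A be a bounded lattice with canonical extension A^δ. For any a ∈ A and open elements o₁, o₂ ∈ O(A^δ), if a ≤ o₁ ∨ o₂ then there exist b₁, b₂ ∈ A with b₁ ≤ o₁, b₂ ≤ o₂, and a ≤ b₁ ∨ b₂. -/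
/-! Write `oᵢ = ⋁ Iᵢ` with `Iᵢ ⊆ A`. Then `o₁ ⊔ o₂ ≤ ⋁ (I₁ ⊻ I₂)`, and `I₁ ⊻ I₂ ⊆ A` since `A` is
closed under joins, so compactness applied to `a ≤ ⋁ (I₁ ⊻ I₂)` gives a single `x₁ ⊔ x₂ ≥ a`
with `xᵢ ∈ Iᵢ`, hence `xᵢ ≤ oᵢ`. -/

variable {α : Type*} [CompleteLattice α]

open scoped SetFamily

theorem sSup_sup_sSup_le_sSup_sups {s t : Set α} (hs : s.Nonempty) (ht : t.Nonempty) :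
    sSup s ⊔ sSup t ≤ sSup (s ⊻ t) := by
  obtain ⟨x, hx⟩ := hs
  obtain ⟨y, hy⟩ := ht
  refine sup_le (sSup_le fun a ha => ?_) (sSup_le fun b hb => ?_)
  · exact le_sSup_of_le (Set.sup_mem_sups ha hy) le_sup_left
  · exact le_sSup_of_le (Set.sup_mem_sups hx hb) le_sup_right

theorem IsBoundedSublattice.sups_subset {S s t : Set α} (hS : IsBoundedSublattice S)
    (hs : s ⊆ S) (ht : t ⊆ S) : s ⊻ t ⊆ S := by
  rintro _ ⟨a, ha, b, hb, rfl⟩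
  exact (hS.2.2 a (hs ha) b (ht hb)).1

theorem IsCompactSub.exists_le_of_le_sSup {S I : Set α} (hc : IsCompactSub S) {a : α}
    (ha : a ∈ S) (hI : I ⊆ S) (hIne : I.Nonempty) (h : a ≤ sSup I) : ∃ b ∈ I, a ≤ b := by
  obtain ⟨_, rfl, b, hb, hab⟩ :=
    hc {a} I (Set.singleton_subset_iff.2 ha) hI (Set.singleton_nonempty a) hIne
      (by rwa [sInf_singleton])
  exact ⟨b, hb, hab⟩

theorem stmt8_general (S : Set α) (hS : IsBoundedSublattice S)
    (hc : IsCompactSub S) (a o₁ o₂ : α)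
    (ha : a ∈ S) (ho₁ : IsOpenElem S o₁) (ho₂ : IsOpenElem S o₂)
    (h : a ≤ o₁ ⊔ o₂) :
    ∃ b₁ ∈ S, ∃ b₂ ∈ S, b₁ ≤ o₁ ∧ b₂ ≤ o₂ ∧ a ≤ b₁ ⊔ b₂ := by
  obtain ⟨I₁, hI₁, hI₁ne, rfl⟩ := ho₁
  obtain ⟨I₂, hI₂, hI₂ne, rfl⟩ := ho₂
  obtain ⟨_, ⟨b₁, hb₁, b₂, hb₂, rfl⟩, hab⟩ :=
    hc.exists_le_of_le_sSup ha (hS.sups_subset hI₁ hI₂) (hI₁ne.sups hI₂ne)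
      (h.trans (sSup_sup_sSup_le_sSup_sups hI₁ne hI₂ne))
  exact ⟨b₁, hI₁ hb₁, b₂, hI₂ hb₂, le_sSup hb₁, le_sSup hb₂, hab⟩

theorem stmt8 (S : Set α) (hS : IsBoundedSublattice S) (hd : IsDenseSub S)
    (hc : IsCompactSub S) (a o₁ o₂ : α)
    (ha : a ∈ S) (ho₁ : IsOpenElem S o₁) (ho₂ : IsOpenElem S o₂)
    (h : a ≤ o₁ ⊔ o₂) :
    ∃ b₁ ∈ S, ∃ b₂ ∈ S, b₁ ≤ o₁ ∧ b₂ ≤ o₂ ∧ a ≤ b₁ ⊔ b₂ :=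
  stmt8_general S hS hc a o₁ o₂ ha ho₁ ho₂ h
end

section
/- Let A be a bounded lattice with a subordination relation ≺, canonical extension A^δ, and ◇a = ⋀{b | a ≺ b} extended by ◇^σ k = ⋀{◇a | k ≤ a, a ∈ A} on closed elements and ◇^σ u = ⋁{◇^σ k | k closed, k ≤ u} on arbitrary u ∈ A^δ. Then ◇^σ : A^δ → A^δ is completely join-preserving: ◇^σ(⋁ S) = ⋁{◇^σ u | u ∈ S} for every S ⊆ A^δ. -/
variable {α : Type*} [CompleteLattice α]

/-- A subordination relation on the sublattice S. -/
def IsSubordination (S : Set α) (R : α → α → Prop) : Prop :=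
  R ⊥ ⊥ ∧ R ⊤ ⊤ ∧
  (∀ a ∈ S, ∀ b ∈ S, ∀ c ∈ S, R a b → R a c → R a (b ⊓ c)) ∧
  (∀ a ∈ S, ∀ b ∈ S, ∀ c ∈ S, R a c → R b c → R (a ⊔ b) c) ∧
  (∀ a ∈ S, ∀ b ∈ S, ∀ c ∈ S, ∀ d ∈ S, a ≤ b → R b c → c ≤ d → R a d)

/-- The slanted diamond on elements of S. -/
def diaA (S : Set α) (R : α → α → Prop) (a : α) : α :=
  sInf {b | b ∈ S ∧ R a b}

/-- The sigma-extension of the diamond to closed elements. -/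
def diaK (S : Set α) (R : α → α → Prop) (k : α) : α :=
  sInf (diaA S R '' {a | a ∈ S ∧ k ≤ a})

/-- The sigma-extension of the diamond to arbitrary elements. -/
def diaU (S : Set α) (R : α → α → Prop) (u : α) : α :=
  sSup (diaK S R '' {k | IsClosedElem S k ∧ k ≤ u})

/-!
For an open element `o`, compactness gives `◇^σ u ≤ o ↔ u ≤ ⋁ {a ∈ A | a ≺ b ≤ o for some b ∈ A}`
in both directions (through the closed elements below `u`, which by density join to `u`).
Whether `◇^σ u ≤ o` thus only depends on `u` through a join condition, so it holds for `⋁ T` as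
soon as it holds for every member of `T`; as every element is a meet of open elements, this
gives `◇^σ (⋁ T) ≤ ⋁ {◇^σ u | u ∈ T}`. The other inequality is monotonicity.
-/

open Set

def subordBelow (S : Set α) (R : α → α → Prop) (o : α) : Set α :=
  {a | a ∈ S ∧ ∃ b ∈ S, R a b ∧ b ≤ o}

section

variable {S : Set α} {R : α → α → Prop}

theorem diaU_mono : Monotone (diaU S R) := fun _ _ huv =>
  sSup_le_sSup (image_mono fun _ ⟨hk, hku⟩ => ⟨hk, hku.trans huv⟩)

theorem diaK_eq_sInf (k : α) :
    diaK S R k = sInf {b | ∃ a ∈ S, k ≤ a ∧ b ∈ S ∧ R a b} := by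
  apply le_antisymm
  · refine le_sInf fun b ⟨a, haS, hka, hbS, hRab⟩ => ?_
    exact sInf_le_of_le ⟨a, ⟨haS, hka⟩, rfl⟩ (sInf_le ⟨hbS, hRab⟩)
  · refine le_sInf ?_
    rintro _ ⟨a, ⟨haS, hka⟩, rfl⟩
    exact le_sInf fun b ⟨hbS, hRab⟩ => sInf_le ⟨a, haS, hka, hbS, hRab⟩

theorem le_sSup_subordBelow_of_diaK_le (htop : ⊤ ∈ S) (hRtop : R ⊤ ⊤) (hc : IsCompactSub S)
    {m : α} {I : Set α} (hIS : I ⊆ S) (hIne : I.Nonempty) (h : diaK S R m ≤ sSup I) :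
    m ≤ sSup (subordBelow S R (sSup I)) := by
  rw [diaK_eq_sInf] at h
  have hsub : {b | ∃ a ∈ S, m ≤ a ∧ b ∈ S ∧ R a b} ⊆ S := fun _ ⟨_, _, _, hbS, _⟩ => hbS
  obtain ⟨b, ⟨a, haS, hma, hbS, hRab⟩, c, hcI, hbc⟩ :=
    hc _ I hsub hIS ⟨⊤, ⊤, htop, le_top, htop, hRtop⟩ hIne h
  exact hma.trans (le_sSup ⟨haS, b, hbS, hRab, hbc.trans (le_sSup hcI)⟩)

theorem diaK_le_of_le_sSup_subordBelow (hbot : ⊥ ∈ S) (hRbot : R ⊥ ⊥) (hc : IsCompactSub S)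
    {k o : α} (hk : IsClosedElem S k) (h : k ≤ sSup (subordBelow S R o)) :
    diaK S R k ≤ o := by
  obtain ⟨F, hFS, hFne, rfl⟩ := hk
  obtain ⟨f, hfF, a, ⟨haS, b, hbS, hRab, hbo⟩, hfa⟩ :=
    hc F (subordBelow S R o) hFS (fun _ ha => ha.1) hFne ⟨⊥, hbot, ⊥, hbot, hRbot, bot_le⟩ h
  calc diaK S R (sInf F) ≤ diaA S R a := sInf_le ⟨a, ⟨haS, (sInf_le hfF).trans hfa⟩, rfl⟩
    _ ≤ b := sInf_le ⟨hbS, hRab⟩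
    _ ≤ o := hbo

theorem diaU_le_iff (hbot : ⊥ ∈ S) (htop : ⊤ ∈ S) (hRbot : R ⊥ ⊥) (hRtop : R ⊤ ⊤)
    (hd : IsDenseSub S) (hc : IsCompactSub S) {u o : α} (ho : IsOpenElem S o) :
    diaU S R u ≤ o ↔ u ≤ sSup (subordBelow S R o) := by
  obtain ⟨I, hIS, hIne, rfl⟩ := ho
  constructor
  · intro h
    rw [(hd u).1]
    refine sSup_le fun m hm => le_sSup_subordBelow_of_diaK_le htop hRtop hc hIS hIne ?_
    exact (le_sSup (mem_image_of_mem _ hm)).trans h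
  · intro h
    refine sSup_le ?_
    rintro _ ⟨k, ⟨hk, hku⟩, rfl⟩
    exact diaK_le_of_le_sSup_subordBelow hbot hRbot hc hk (hku.trans h)

end

theorem stmt16 (S : Set α) (hS : IsBoundedSublattice S) (hd : IsDenseSub S)
    (hc : IsCompactSub S) (R : α → α → Prop) (hR : IsSubordination S R) :
    ∀ T : Set α, diaU S R (sSup T) = sSup (diaU S R '' T) := by
  obtain ⟨hbot, htop, -⟩ := hS
  obtain ⟨hRbot, hRtop, -⟩ := hR
  intro T
  refine le_antisymm ?_ (sSup_le ?_)
  · refine (le_sInf ?_).trans (hd _).2.ge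
    rintro o ⟨ho, hTo⟩
    rw [diaU_le_iff hbot htop hRbot hRtop hd hc ho]
    refine sSup_le fun u hu => ?_
    rw [← diaU_le_iff hbot htop hRbot hRtop hd hc ho]
    exact (le_sSup (mem_image_of_mem _ hu)).trans hTo
  · rintro _ ⟨u, hu, rfl⟩
    exact diaU_mono (le_sSup hu)
end
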